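/- For every real number α with 0 < α ≤ 4, define F(α,m) = Σ_{r=1}^{m−1} C(m−1, r) (r+1)^{α−m} for integers m ≥ 2, where C(m−1,r) is the binomial coefficient. Then F(α,m) ≤ F(α,3) for every integer m ≥ 2; that is, max_{m≥2} F(α,m) ≤ F(α,3) = 2^{α−2} + 3^{α−3}. Moreover F(α,m) is decreasing in m for m ≥ 3, i.e. F(α,m) ≥ F(α,m+1) for all integers m ≥ 3. -/
import Mathlib


/-- `F(α, m) = Σ_{r=1}^{m-1} C(m-1, r) (r+1)^{α-m}`. -/
noncomputable def Ffun (α : ℝ) (m : ℕ) : ℝ :=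
  ∑ r ∈ Finset.Icc 1 (m - 1), ((m - 1).choose r : ℝ) * ((r : ℝ) + 1) ^ (α - (m : ℝ))

lemma choose_aux (n s : ℕ) (hs : s + 1 ≤ n) :
    (n + 1).choose (s + 1) ≤ (s + 2) * n.choose (s + 1) := by
  have h1 : n.choose s ≤ n.choose (s + 1) * (s + 1) := by
    calc n.choose s = n.choose s * 1 := (mul_one _).symm
      _ ≤ n.choose s * (n - s) := Nat.mul_le_mul_left _ (by omega)
      _ = n.choose (s + 1) * (s + 1) := (Nat.choose_succ_right_eq n s).symm
  calc (n + 1).choose (s + 1) = n.choose s + n.choose (s + 1) := Nat.choose_succ_succ n s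
    _ ≤ n.choose (s + 1) * (s + 1) + n.choose (s + 1) := by omega
    _ = (s + 2) * n.choose (s + 1) := by ring

lemma term_le (α : ℝ) (k r : ℕ) (hr : 1 ≤ r) (hrk : r ≤ k) :
    ((k + 1).choose r : ℝ) * ((r : ℝ) + 1) ^ (α - ((k : ℝ) + 2)) ≤
      (k.choose r : ℝ) * ((r : ℝ) + 1) ^ (α - ((k : ℝ) + 1)) := by
  obtain ⟨s, rfl⟩ : ∃ s, r = s + 1 := ⟨r - 1, by omega⟩
  push_cast
  set x : ℝ := (s : ℝ) + 1 + 1 with hxdef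
  have hx : (0 : ℝ) < x := by positivity
  have hxpow : (0 : ℝ) < x ^ (α - ((k : ℝ) + 1)) := Real.rpow_pos_of_pos hx _
  have hC : ((k + 1).choose (s + 1) : ℝ) ≤ x * (k.choose (s + 1) : ℝ) := by
    have := choose_aux k s (by omega)
    have : (((k + 1).choose (s + 1) : ℕ) : ℝ) ≤ (((s + 2) * k.choose (s + 1) : ℕ) : ℝ) := by
      exact_mod_cast this
    push_cast at this
    rw [hxdef]; linarith
  have hexp : α - ((k : ℝ) + 2) = (α - ((k : ℝ) + 1)) - 1 := by ring
  rw [hexp, Real.rpow_sub hx, Real.rpow_one]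
  calc ((k + 1).choose (s + 1) : ℝ) * (x ^ (α - ((k : ℝ) + 1)) / x)
      = (((k + 1).choose (s + 1) : ℝ)) / x * x ^ (α - ((k : ℝ) + 1)) := by ring
    _ ≤ (k.choose (s + 1) : ℝ) * x ^ (α - ((k : ℝ) + 1)) := by
        apply mul_le_mul_of_nonneg_right _ hxpow.le
        rw [div_le_iff₀ hx]
        nlinarith
  
lemma Icc_top_split (k : ℕ) (hk : 1 ≤ k) :
    Finset.Icc 1 (k + 1) = insert (k + 1) (Finset.Icc 1 k) := by
  ext x; simp only [Finset.mem_Icc, Finset.mem_insert]; omega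

lemma Icc_bot_split (k : ℕ) (hk : 1 ≤ k) :
    Finset.Icc 1 k = insert 1 (Finset.Icc 2 k) := by
  ext x; simp only [Finset.mem_Icc, Finset.mem_insert]; omega

lemma Ffun_succ_le (α : ℝ) (hα4 : α ≤ 4) (m : ℕ) (hm : 3 ≤ m) :
    Ffun α (m + 1) ≤ Ffun α m := by
  obtain ⟨k, rfl⟩ : ∃ k, m = k + 1 := ⟨m - 1, by omega⟩
  have hk : 2 ≤ k := by omega
  unfold Ffun
  simp only [Nat.add_sub_cancel]
  push_cast
  rw [Icc_top_split k (by omega), Finset.sum_insert (by simp),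
    Icc_bot_split k (by omega), Finset.sum_insert (by simp),
    Finset.sum_insert (by simp)]
  push_cast
  have hmain : ∑ r ∈ Finset.Icc 2 k,
      ((k + 1).choose r : ℝ) * ((r : ℝ) + 1) ^ (α - ((k : ℝ) + 1 + 1)) ≤
      ∑ r ∈ Finset.Icc 2 k, (k.choose r : ℝ) * ((r : ℝ) + 1) ^ (α - ((k : ℝ) + 1)) := by
    apply Finset.sum_le_sum
    intro r hr
    simp only [Finset.mem_Icc] at hr
    have := term_le α k r (by omega) hr.2
    calc ((k + 1).choose r : ℝ) * ((r : ℝ) + 1) ^ (α - ((k : ℝ) + 1 + 1))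
        = ((k + 1).choose r : ℝ) * ((r : ℝ) + 1) ^ (α - ((k : ℝ) + 2)) := by
          rw [show α - ((k : ℝ) + 1 + 1) = α - ((k : ℝ) + 2) by ring]
      _ ≤ _ := this
  -- edge terms: (k+1).choose (k+1) = 1 top term, and r = 1 terms
  have hz : α - ((k : ℝ) + 1 + 1) ≤ 0 := by
    have : (2 : ℝ) ≤ (k : ℝ) := by exact_mod_cast hk
    linarith
  have htop : ((k : ℝ) + 1 + 1) ^ (α - ((k : ℝ) + 1 + 1)) ≤
      (2 : ℝ) ^ (α - ((k : ℝ) + 1 + 1)) := by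
    apply Real.rpow_le_rpow_of_nonpos (by norm_num) _ hz
    have : (2 : ℝ) ≤ (k : ℝ) := by exact_mod_cast hk
    linarith
  have h2pos : (0 : ℝ) < (2 : ℝ) ^ (α - ((k : ℝ) + 1 + 1)) := Real.rpow_pos_of_pos (by norm_num) _
  have hedge : ((k + 1).choose (k + 1) : ℝ) * ((k : ℝ) + 1 + 1) ^ (α - ((k : ℝ) + 1 + 1)) +
      ((k + 1).choose 1 : ℝ) * ((1 : ℝ) + 1) ^ (α - ((k : ℝ) + 1 + 1)) ≤
      (k.choose 1 : ℝ) * ((1 : ℝ) + 1) ^ (α - ((k : ℝ) + 1)) := by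
    rw [Nat.choose_self, Nat.choose_one_right, Nat.choose_one_right]
    have hr2 : ((1 : ℝ) + 1) = (2 : ℝ) := by norm_num
    rw [hr2]
    have hsplit : (2 : ℝ) ^ (α - ((k : ℝ) + 1)) =
        2 * (2 : ℝ) ^ (α - ((k : ℝ) + 1 + 1)) := by
      rw [show α - ((k : ℝ) + 1) = (α - ((k : ℝ) + 1 + 1)) + 1 by ring,
        Real.rpow_add_one (by norm_num)]
      ring
    rw [hsplit]
    push_cast
    have hkr : (2 : ℝ) ≤ (k : ℝ) := by exact_mod_cast hk
    nlinarith
  linarith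

lemma Ffun_three (α : ℝ) : Ffun α 3 = (2:ℝ) ^ (α - 2) + (3:ℝ) ^ (α - 3) := by
  unfold Ffun
  rw [show (3 : ℕ) - 1 = 2 from rfl, show Finset.Icc 1 2 = {1, 2} from rfl]
  rw [Finset.sum_insert (by decide), Finset.sum_singleton]
  norm_num
  rw [show α - 2 = (α - 3) + 1 by ring, Real.rpow_add_one (by norm_num)]
  ring

lemma Ffun_two (α : ℝ) : Ffun α 2 = (2:ℝ) ^ (α - 2) := by
  unfold Ffun
  rw [show (2 : ℕ) - 1 = 1 from rfl, show Finset.Icc 1 1 = {1} from rfl,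
    Finset.sum_singleton]
  norm_num

/-- for `0 < α ≤ 4`, `F(α, m) ≤ F(α, 3)` for every `m ≥ 2`
(and `F(α,3) = 2^{α-2} + 3^{α-3}`), and `F(α, ·)` is decreasing for `m ≥ 3`. -/
theorem Ffun_le_Ffun_three : ∀ α : ℝ, 0 < α → α ≤ 4 →
    (∀ m : ℕ, 2 ≤ m → Ffun α m ≤ Ffun α 3) ∧
    Ffun α 3 = (2:ℝ) ^ (α - 2) + (3:ℝ) ^ (α - 3) ∧
    (∀ m : ℕ, 3 ≤ m → Ffun α (m + 1) ≤ Ffun α m) := by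
  intro α hα hα4
  refine ⟨?_, Ffun_three α, fun m hm => Ffun_succ_le α hα4 m hm⟩
  have h3 : ∀ m : ℕ, 3 ≤ m → Ffun α m ≤ Ffun α 3 := by
    intro m hm
    induction m, hm using Nat.le_induction with
    | base => exact le_refl _
    | succ n hn ih => exact le_trans (Ffun_succ_le α hα4 n hn) ih
  intro m hm
  rcases Nat.eq_or_lt_of_le hm with h | h
  · rw [← h, Ffun_two α, Ffun_three α]
    have : (0 : ℝ) < (3 : ℝ) ^ (α - 3) := Real.rpow_pos_of_pos (by norm_num) _
    linarith
  · exact h3 m h
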